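/- arXiv:1007.2311 — 2 statements merged into one kernel-verified Lean document; each statement's English description precedes it below -/
import Mathlib

section
/- Let n and k be positive integers and let a, b be integers with 0 ≤ a ≤ n and 0 ≤ b ≤ n. If there exists an orientation of the n-cube in which every vertex has in-degree a or b, then there exists an orientation of the (k·n)-cube in which every vertex has in-degree k·a or k·b. -/
/-- Flip coordinate `i` of a binary `n`-tuple. -/
def flipBit {n : ℕ} (v : Fin n → ZMod 2) (i : Fin n) : Fin n → ZMod 2 :=
  Function.update v i (v i + 1)

/-- An orientation of the `n`-cube: to each edge (a pair of vertices differing in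
exactly one coordinate) we assign a head, one of its two endpoints.  The edge at
vertex `v` in direction `i` joins `v` and `flipBit v i`; `head v i` is the
assigned head of that edge, which must be one of the endpoints and must not
depend on from which endpoint the edge is viewed. -/
structure CubeOrientation (n : ℕ) where
  head : (Fin n → ZMod 2) → Fin n → (Fin n → ZMod 2)
  head_mem : ∀ v i, head v i = v ∨ head v i = flipBit v i
  compatible : ∀ v i, head (flipBit v i) i = head v i

/-- The in-degree of a vertex `v`: the number of edges incident to `v`
whose head is `v`. -/
def CubeOrientation.inDeg {n : ℕ} (o : CubeOrientation n) (v : Fin n → ZMod 2) : ℕ :=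
  (Finset.univ.filter fun i : Fin n => o.head v i = v).card

/-!
Pull the orientation back along the linear map `(Fin (k * n) → ZMod 2) → (Fin n → ZMod 2)` whose
`i`-th coordinate is the sum of the `k` coordinates `c` with `c % n = i`. Flipping such a
coordinate `c` flips coordinate `i` of the image, so orienting every edge of the big cube like the
edge it maps to is consistent, and each incoming edge at the image of `v` gives `k` incoming edges
at `v`.
-/

open Finset

theorem flipBit_eq_add_single {n : ℕ} (v : Fin n → ZMod 2) (i : Fin n) :
    flipBit v i = v + Pi.single i 1 := by
  funext j
  rcases eq_or_ne j i with rfl | hj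
  · simp [flipBit]
  · simp [flipBit, hj]

theorem flipBit_flipBit {n : ℕ} (v : Fin n → ZMod 2) (i : Fin n) :
    flipBit (flipBit v i) i = v := by
  rw [flipBit_eq_add_single, flipBit_eq_add_single, add_assoc, ← Pi.single_add,
    CharTwo.add_self_eq_zero, Pi.single_zero, add_zero]

theorem flipBit_ne {n : ℕ} (v : Fin n → ZMod 2) (i : Fin n) : flipBit v i ≠ v := by
  rw [flipBit_eq_add_single, Ne, add_eq_left, ← Pi.single_zero i, Pi.single_inj]
  exact one_ne_zero

namespace CubeOrientation

variable {n : ℕ} (o : CubeOrientation n)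

/-- The edge at `flipBit v i` in direction `i` is the edge at `v`, so exactly one endpoint is the head. -/
theorem head_flipBit_eq_iff (v : Fin n → ZMod 2) (i : Fin n) :
    o.head (flipBit v i) i = flipBit v i ↔ o.head v i ≠ v := by
  rw [o.compatible]
  rcases o.head_mem v i with h | h <;> rw [h]
  · simpa using (flipBit_ne v i).symm
  · simpa using flipBit_ne v i

end CubeOrientation

section FiberSum

variable {m n : ℕ} (r : Fin m → Fin n)

def fiberSum (v : Fin m → ZMod 2) (i : Fin n) : ZMod 2 :=
  ∑ c with r c = i, v c

theorem fiberSum_add (v w : Fin m → ZMod 2) : fiberSum r (v + w) = fiberSum r v + fiberSum r w := by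
  funext i
  simp [fiberSum, sum_add_distrib]

theorem fiberSum_single (c : Fin m) : fiberSum r (Pi.single c 1) = Pi.single (r c) 1 := by
  funext i
  simp [fiberSum, Pi.single_apply, eq_comm]

theorem fiberSum_flipBit (v : Fin m → ZMod 2) (c : Fin m) :
    fiberSum r (flipBit v c) = flipBit (fiberSum r v) (r c) := by
  rw [flipBit_eq_add_single, flipBit_eq_add_single, fiberSum_add, fiberSum_single]

end FiberSum

namespace CubeOrientation

variable {m n : ℕ}

def comap (o : CubeOrientation n) (r : Fin m → Fin n) : CubeOrientation m where
  head v c := if o.head (fiberSum r v) (r c) = fiberSum r v then v else flipBit v c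
  head_mem v c := by split_ifs <;> simp
  compatible v c := by
    rw [fiberSum_flipBit]
    by_cases h : o.head (fiberSum r v) (r c) = fiberSum r v
    · rw [if_neg ((o.head_flipBit_eq_iff _ _).not.mpr (not_not.mpr h)), if_pos h, flipBit_flipBit]
    · rw [if_pos ((o.head_flipBit_eq_iff _ _).mpr h), if_neg h]

theorem inDeg_comap (o : CubeOrientation n) (r : Fin m → Fin n) (v : Fin m → ZMod 2) :
    (o.comap r).inDeg v = ∑ i with o.head (fiberSum r v) i = fiberSum r v, #{c | r c = i} := by
  have hfilter : univ.filter (fun c => (o.comap r).head v c = v) =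
      univ.filter fun c => o.head (fiberSum r v) (r c) = fiberSum r v := by
    ext c
    by_cases h : o.head (fiberSum r v) (r c) = fiberSum r v <;> simp [comap, h, flipBit_ne]
  rw [inDeg, hfilter, card_eq_sum_card_fiberwise (f := r)
    (t := univ.filter fun i => o.head (fiberSum r v) i = fiberSum r v) (fun c hc => by simpa using hc)]
  refine sum_congr rfl fun i hi => congrArg card ?_
  ext c
  simp only [mem_filter, mem_univ, true_and] at hi ⊢
  exact ⟨And.right, fun hc => ⟨hc ▸ hi, hc⟩⟩

theorem inDeg_comap_of_card_fiber {k : ℕ} (o : CubeOrientation n) {r : Fin m → Fin n}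
    (hr : ∀ i, #{c | r c = i} = k) (v : Fin m → ZMod 2) :
    (o.comap r).inDeg v = k * o.inDeg (fiberSum r v) := by
  rw [inDeg_comap, sum_congr rfl fun i _ => hr i, sum_const, smul_eq_mul, mul_comm, inDeg]

end CubeOrientation

theorem card_filter_modNat_eq (k : ℕ) {n : ℕ} (i : Fin n) : #{c : Fin (k * n) | c.modNat = i} = k := by
  have hfiber : ({c : Fin (k * n) | c.modNat = i} : Finset _) =
      (univ ×ˢ {i}).map finProdFinEquiv.toEmbedding := by
    ext c
    simp [eq_comm]
  rw [hfiber, card_map, card_product, card_univ, Fintype.card_fin, card_singleton, mul_one]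

theorem hypercube_two_indegrees_scale_general (n k : ℕ) (a b : ℤ)
    (h : ∃ o : CubeOrientation n, ∀ v, (o.inDeg v : ℤ) = a ∨ (o.inDeg v : ℤ) = b) :
    ∃ o : CubeOrientation (k * n), ∀ v,
      (o.inDeg v : ℤ) = k * a ∨ (o.inDeg v : ℤ) = k * b := by
  obtain ⟨o, ho⟩ := h
  refine ⟨o.comap Fin.modNat, fun v => ?_⟩
  rw [o.inDeg_comap_of_card_fiber (card_filter_modNat_eq k) v, Nat.cast_mul]
  rcases ho (fiberSum Fin.modNat v) with h | h <;> rw [h] <;> simp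

theorem hypercube_two_indegrees_scale (n k : ℕ) (hn : 0 < n) (hk : 0 < k) (a b : ℤ)
    (ha0 : 0 ≤ a) (han : a ≤ n) (hb0 : 0 ≤ b) (hbn : b ≤ n)
    (h : ∃ o : CubeOrientation n, ∀ v, (o.inDeg v : ℤ) = a ∨ (o.inDeg v : ℤ) = b) :
    ∃ o : CubeOrientation (k * n), ∀ v,
      (o.inDeg v : ℤ) = k * a ∨ (o.inDeg v : ℤ) = k * b :=
  hypercube_two_indegrees_scale_general n k a b h
end

section
/- Let k ≥ 2, n = 2^k − 1, and let H be a perfect 1-error-correcting code in the n-cube. Fix h ∈ H and a coordinate i. For every coordinate j ≠ i there exist a unique h' ∈ H and a unique coordinate ℓ such that flipping coordinates i and j of h equals h' with coordinate ℓ flipped; moreover h' ≠ h and ℓ ≠ i, and the resulting map f sending j to this coordinate ℓ (and sending i to i) is a permutation of the n coordinates fixing i. -/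
/-- A perfect 1-error-correcting code in the `n`-cube: every vertex is within
Hamming distance 1 of exactly one codeword. -/
def IsPerfectCode {n : ℕ} (H : Set (Fin n → ZMod 2)) : Prop :=
  ∀ v : Fin n → ZMod 2, ∃! h, h ∈ H ∧ hammingDist v h ≤ 1


/-! Two codewords of a perfect code are at distance at least 3, so for `j ≠ i` the vertex
`h⟨i,j⟩`, at distance 2 from `h`, is not a codeword; hence `h⟨i,j⟩ = c⟨ℓ⟩` for a unique
codeword `c` and coordinate `ℓ`. Here `ℓ ≠ i`, since otherwise `c = h⟨j⟩` would be a codeword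
adjacent to `h`. The relation between `j` and `ℓ` is symmetric (`h⟨i,ℓ⟩ = c⟨j⟩`), so `j ↦ ℓ`
is an involution of the coordinates other than `i`. -/

variable {n : ℕ}

theorem flipBit_apply (v : Fin n → ZMod 2) (i x : Fin n) :
    flipBit v i x = if x = i then v i + 1 else v x :=
  Function.update_apply v i _ x

@[simp]
theorem flipBit_flipBit_self (v : Fin n → ZMod 2) (i : Fin n) : flipBit (flipBit v i) i = v := by
  simp [flipBit, Function.update_idem, add_assoc, CharTwo.add_self_eq_zero]

theorem flipBit_comm (v : Fin n → ZMod 2) (a b : Fin n) :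
    flipBit (flipBit v a) b = flipBit (flipBit v b) a := by
  funext x
  by_cases hxa : x = a <;> by_cases hxb : x = b <;> simp_all [flipBit_apply]

theorem flipBit_ne_self (v : Fin n → ZMod 2) (i : Fin n) : flipBit v i ≠ v := fun he => by
  simpa [flipBit_apply] using congrFun he i

theorem flipBit_injective (v : Fin n → ZMod 2) : Function.Injective (flipBit v) := by
  intro a b he
  by_contra hab
  simpa [flipBit_apply, hab] using congrFun he a

theorem flipBit_eq_flipBit_comm {u w : Fin n → ZMod 2} {j ℓ : Fin n} :
    flipBit u j = flipBit w ℓ ↔ flipBit u ℓ = flipBit w j := by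
  suffices ∀ {j ℓ : Fin n}, flipBit u j = flipBit w ℓ → flipBit u ℓ = flipBit w j from
    ⟨this, this⟩
  intro j ℓ he
  calc flipBit u ℓ = flipBit (flipBit (flipBit u j) j) ℓ := by rw [flipBit_flipBit_self]
    _ = flipBit w j := by rw [he, flipBit_comm w ℓ j, flipBit_flipBit_self]

theorem hammingDist_flipBit_self (v : Fin n → ZMod 2) (i : Fin n) :
    hammingDist (flipBit v i) v = 1 := by
  rw [hammingDist, Finset.card_eq_one]
  refine ⟨i, Finset.ext fun x => ?_⟩
  by_cases hx : x = i <;> simp [flipBit_apply, hx]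

theorem hammingDist_flipBit_flipBit (v : Fin n → ZMod 2) {i j : Fin n} (hij : j ≠ i) :
    hammingDist (flipBit (flipBit v i) j) v = 2 := by
  rw [hammingDist, Finset.card_eq_two]
  refine ⟨i, j, hij.symm, Finset.ext fun x => ?_⟩
  by_cases hxi : x = i <;> by_cases hxj : x = j <;> simp_all [flipBit_apply]

theorem flipBit_flipBit_ne_flipBit (v : Fin n → ZMod 2) {i j : Fin n} (hij : j ≠ i) (ℓ : Fin n) :
    flipBit (flipBit v i) j ≠ flipBit v ℓ := fun he => by
  simpa [he, hammingDist_flipBit_self] using hammingDist_flipBit_flipBit v hij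

theorem exists_eq_flipBit_of_hammingDist_eq_one {u v : Fin n → ZMod 2}
    (huv : hammingDist u v = 1) : ∃ ℓ, u = flipBit v ℓ := by
  obtain ⟨ℓ, hℓ⟩ := Finset.card_eq_one.mp huv
  have hdiff : ∀ x, u x ≠ v x ↔ x = ℓ := fun x => by
    simpa using Finset.ext_iff.mp hℓ x
  refine ⟨ℓ, funext fun x => ?_⟩
  rw [flipBit_apply]
  split_ifs with hx
  · subst hx
    have ne_iff : ∀ a b : ZMod 2, a ≠ b → a = b + 1 := by decide
    exact ne_iff _ _ ((hdiff x).mpr rfl)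
  · exact not_not.mp (mt (hdiff x).mp hx)

namespace IsPerfectCode

variable {H : Set (Fin n → ZMod 2)} (hH : IsPerfectCode H)
include hH

theorem eq_of_hammingDist_le_one {v c₁ c₂ : Fin n → ZMod 2} (hc₁ : c₁ ∈ H) (hc₂ : c₂ ∈ H)
    (hd₁ : hammingDist v c₁ ≤ 1) (hd₂ : hammingDist v c₂ ≤ 1) : c₁ = c₂ :=
  (hH v).unique ⟨hc₁, hd₁⟩ ⟨hc₂, hd₂⟩

theorem flipBit_notMem {c : Fin n → ZMod 2} (hc : c ∈ H) (a : Fin n) : flipBit c a ∉ H :=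
  fun hca => flipBit_ne_self c a <|
    hH.eq_of_hammingDist_le_one hca hc (by simp) (hammingDist_flipBit_self c a).le

theorem eq_and_eq_of_flipBit_eq_flipBit {c₁ c₂ : Fin n → ZMod 2} {a b : Fin n}
    (hc₁ : c₁ ∈ H) (hc₂ : c₂ ∈ H) (he : flipBit c₁ a = flipBit c₂ b) : c₁ = c₂ ∧ a = b := by
  have hc : c₁ = c₂ := hH.eq_of_hammingDist_le_one hc₁ hc₂
    (hammingDist_flipBit_self c₁ a).le (he ▸ hammingDist_flipBit_self c₂ b).le
  subst hc
  exact ⟨rfl, flipBit_injective c₁ he⟩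

theorem flipBit_flipBit_notMem {c : Fin n → ZMod 2} (hc : c ∈ H) {i j : Fin n} (hij : j ≠ i) :
    flipBit (flipBit c i) j ∉ H := fun hcij =>
  hij (hH.eq_and_eq_of_flipBit_eq_flipBit hc hcij (by rw [flipBit_flipBit_self])).2.symm

theorem exists_eq_flipBit_of_notMem {v : Fin n → ZMod 2} (hv : v ∉ H) :
    ∃ c ∈ H, ∃ ℓ, v = flipBit c ℓ := by
  obtain ⟨c, ⟨hc, hvc⟩, -⟩ := hH v
  have hpos : 0 < hammingDist v c := hammingDist_pos.mpr fun he => hv (he ▸ hc)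
  exact ⟨c, hc, exists_eq_flipBit_of_hammingDist_eq_one (by omega)⟩

end IsPerfectCode

def IsFlipPartner (H : Set (Fin n → ZMod 2)) (h : Fin n → ZMod 2) (i j ℓ : Fin n) : Prop :=
  ∃ c ∈ H, flipBit (flipBit h i) j = flipBit c ℓ

section IsFlipPartner

variable {H : Set (Fin n → ZMod 2)} {h : Fin n → ZMod 2} {i j ℓ : Fin n}

theorem isFlipPartner_comm : IsFlipPartner H h i j ℓ ↔ IsFlipPartner H h i ℓ j := by
  simp only [IsFlipPartner, flipBit_eq_flipBit_comm]

theorem exists_isFlipPartner (hH : IsPerfectCode H) (hh : h ∈ H) (hij : j ≠ i) :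
    ∃ ℓ, IsFlipPartner H h i j ℓ := by
  obtain ⟨c, hc, ℓ, he⟩ := hH.exists_eq_flipBit_of_notMem (hH.flipBit_flipBit_notMem hh hij)
  exact ⟨ℓ, c, hc, he⟩

theorem not_isFlipPartner_right (hH : IsPerfectCode H) (hh : h ∈ H) :
    ¬IsFlipPartner H h i j i := by
  rintro ⟨c, hc, he⟩
  rw [flipBit_eq_flipBit_comm, flipBit_flipBit_self] at he
  exact hH.flipBit_notMem hc j (he ▸ hh)

theorem IsFlipPartner.unique (hH : IsPerfectCode H) {m : Fin n} (hℓ : IsFlipPartner H h i j ℓ)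
    (hm : IsFlipPartner H h i j m) : ℓ = m := by
  obtain ⟨c, hc, he⟩ := hℓ
  obtain ⟨c', hc', he'⟩ := hm
  exact (hH.eq_and_eq_of_flipBit_eq_flipBit hc hc' (he.symm.trans he')).2

theorem exists_involutive_isFlipPartner (hH : IsPerfectCode H) (hh : h ∈ H) (i : Fin n) :
    ∃ f : Fin n → Fin n, Function.Involutive f ∧ f i = i ∧
      ∀ j ≠ i, IsFlipPartner H h i j (f j) := by
  classical
  choose! g hg using fun j (hj : j ≠ i) => exists_isFlipPartner hH hh hj
  set f := Function.update g i i
  have hfi : f i = i := Function.update_self i i g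
  have hf : ∀ j ≠ i, IsFlipPartner H h i j (f j) := fun j hj => by
    simpa [f, hj] using hg j hj
  refine ⟨f, fun j => ?_, hfi, hf⟩
  by_cases hj : j = i
  · rw [hj, hfi, hfi]
  have hfj : f j ≠ i := fun he => not_isFlipPartner_right hH hh (he ▸ hf j hj)
  exact (hf _ hfj).unique hH (isFlipPartner_comm.mp (hf j hj))

end IsFlipPartner

theorem hamming_code_permutation_lemma_general (n : ℕ)
    (H : Set (Fin n → ZMod 2)) (hH : IsPerfectCode H)
    (h : Fin n → ZMod 2) (hh : h ∈ H) (i : Fin n) :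
    ∃ f : Equiv.Perm (Fin n), f i = i ∧
      ∀ j : Fin n, j ≠ i →
        ∃ h' ∈ H, h' ≠ h ∧ f j ≠ i ∧
          flipBit (flipBit h i) j = flipBit h' (f j) ∧
          ∀ h'' ∈ H, ∀ ℓ : Fin n,
            flipBit (flipBit h i) j = flipBit h'' ℓ → h'' = h' ∧ ℓ = f j := by
  obtain ⟨f, hinv, hfi, hf⟩ := exists_involutive_isFlipPartner hH hh i
  refine ⟨hinv.toPerm f, hfi, fun j hj => ?_⟩
  obtain ⟨c, hc, he⟩ := hf j hj
  refine ⟨c, hc, ?_, fun hfj => not_isFlipPartner_right hH hh (hfj ▸ hf j hj), he,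
    fun c' hc' ℓ he' => hH.eq_and_eq_of_flipBit_eq_flipBit hc' hc (he'.symm.trans he)⟩
  rintro rfl
  exact flipBit_flipBit_ne_flipBit c hj (f j) he

theorem hamming_code_permutation_lemma (k : ℕ) (hk : 2 ≤ k) (n : ℕ) (hn : n = 2 ^ k - 1)
    (H : Set (Fin n → ZMod 2)) (hH : IsPerfectCode H)
    (h : Fin n → ZMod 2) (hh : h ∈ H) (i : Fin n) :
    ∃ f : Equiv.Perm (Fin n), f i = i ∧
      ∀ j : Fin n, j ≠ i →
        ∃ h' ∈ H, h' ≠ h ∧ f j ≠ i ∧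
          flipBit (flipBit h i) j = flipBit h' (f j) ∧
          ∀ h'' ∈ H, ∀ ℓ : Fin n,
            flipBit (flipBit h i) j = flipBit h'' ℓ → h'' = h' ∧ ℓ = f j :=
  hamming_code_permutation_lemma_general n H hH h hh i
end
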